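/- arXiv:2505.12366 — 2 statements merged into one kernel-verified Lean document; each statement's English description precedes it below -/
import Mathlib

section
/- Let Ω, r, p, μ⁺, μ⁻, μ, A be as in the mixture setup. For every h : Ω → ℝ such that h is μ⁺-integrable, h is μ⁻-integrable, and h·A is μ-integrable, one has ∫ h(o)·A(o) dμ(o) = √(p(1−p)) · ( ∫ h dμ⁺ − ∫ h dμ⁻ ). (This identity yields the difficulty weight √(p(1−p)) in the TRPO and vanilla policy-gradient surrogate objectives, where h is respectively the per-output averaged likelihood ratio or averaged log-likelihood.) -/
/-!
On `{r = true}` the advantage is the constant `√((1-p)/p)` and on `{r = false}` the constant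
`-√(p/(1-p))`, so each mixture component contributes a constant multiple of `∫ h`; the weights
`p` and `1 - p` turn both constants into `√(p(1-p))`.
-/

open MeasureTheory

lemma Real.mul_sqrt_div_self {a : ℝ} (ha : 0 ≤ a) (b : ℝ) : a * √(b / a) = √(a * b) := by
  rcases ha.eq_or_lt with rfl | ha
  · simp
  · rw [← Real.sqrt_mul_self ha.le, ← Real.sqrt_mul (mul_self_nonneg a), Real.sqrt_mul_self ha.le]
    congr 1
    field_simp

namespace MeasureTheory

variable {Ω : Type*} [MeasurableSpace Ω]

theorem Integrable.mul_of_ae_eq_const {ν : Measure Ω} {h f : Ω → ℝ} {c : ℝ}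
    (hh : Integrable h ν) (hf : ∀ᵐ o ∂ν, f o = c) : Integrable (fun o => h o * f o) ν :=
  (hh.mul_const c).congr (by filter_upwards [hf] with o ho; rw [ho])

theorem integral_mul_of_ae_eq_const {ν : Measure Ω} {h f : Ω → ℝ} {c : ℝ}
    (hf : ∀ᵐ o ∂ν, f o = c) : ∫ o, h o * f o ∂ν = (∫ o, h o ∂ν) * c := by
  rw [← integral_mul_const]
  exact integral_congr_ae (by filter_upwards [hf] with o ho; rw [ho])

theorem integral_ofReal_smul_add_ofReal_smul {ν₁ ν₂ : Measure Ω} {f : Ω → ℝ} {a b : ℝ}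
    (ha : 0 ≤ a) (hb : 0 ≤ b) (hf₁ : Integrable f ν₁) (hf₂ : Integrable f ν₂) :
    ∫ o, f o ∂(ENNReal.ofReal a • ν₁ + ENNReal.ofReal b • ν₂) =
      a * ∫ o, f o ∂ν₁ + b * ∫ o, f o ∂ν₂ := by
  rw [integral_add_measure (hf₁.smul_measure ENNReal.ofReal_ne_top)
      (hf₂.smul_measure ENNReal.ofReal_ne_top),
    integral_smul_measure, integral_smul_measure, ENNReal.toReal_ofReal ha,
    ENNReal.toReal_ofReal hb, smul_eq_mul, smul_eq_mul]

end MeasureTheory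

theorem stmt_6_general {Ω : Type*} [MeasurableSpace Ω]
    (r : Ω → Bool) (hr : Measurable r)
    (p : ℝ) (hp : p ∈ Set.Ioo (0 : ℝ) 1)
    (μpos μneg : Measure Ω) [IsProbabilityMeasure μpos] [IsProbabilityMeasure μneg]
    (hpos : μpos {o | r o = true} = 1) (hneg : μneg {o | r o = false} = 1)
    (μ : Measure Ω)
    (hμ : μ = ENNReal.ofReal p • μpos + ENNReal.ofReal (1 - p) • μneg)
    (A : Ω → ℝ)
    (hA : ∀ o, A o = if r o then Real.sqrt ((1 - p) / p) else -Real.sqrt (p / (1 - p)))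
    (h : Ω → ℝ)
    (hpint : Integrable h μpos) (hmint : Integrable h μneg) :
    ∫ o, h o * A o ∂μ =
      Real.sqrt (p * (1 - p)) * ((∫ o, h o ∂μpos) - ∫ o, h o ∂μneg) := by
  obtain ⟨hp0, hp1⟩ := hp
  have hApos : ∀ᵐ o ∂μpos, A o = √((1 - p) / p) := by
    filter_upwards [(mem_ae_iff_prob_eq_one (hr (measurableSet_singleton true))).2 hpos]
      with o ho
    simp [hA, show r o = true from ho]
  have hAneg : ∀ᵐ o ∂μneg, A o = -√(p / (1 - p)) := by
    filter_upwards [(mem_ae_iff_prob_eq_one (hr (measurableSet_singleton false))).2 hneg]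
      with o ho
    simp [hA, show r o = false from ho]
  have hweight_pos : p * √((1 - p) / p) = √(p * (1 - p)) := Real.mul_sqrt_div_self hp0.le _
  have hweight_neg : (1 - p) * √(p / (1 - p)) = √(p * (1 - p)) := by
    rw [Real.mul_sqrt_div_self (by linarith), mul_comm]
  rw [hμ, integral_ofReal_smul_add_ofReal_smul hp0.le (by linarith)
      (hpint.mul_of_ae_eq_const hApos) (hmint.mul_of_ae_eq_const hAneg),
    integral_mul_of_ae_eq_const hApos, integral_mul_of_ae_eq_const hAneg]
  linear_combination (∫ o, h o ∂μpos) * hweight_pos - (∫ o, h o ∂μneg) * hweight_neg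

theorem stmt_6 {Ω : Type*} [MeasurableSpace Ω]
    (r : Ω → Bool) (hr : Measurable r)
    (p : ℝ) (hp : p ∈ Set.Ioo (0 : ℝ) 1)
    (μpos μneg : Measure Ω) [IsProbabilityMeasure μpos] [IsProbabilityMeasure μneg]
    (hpos : μpos {o | r o = true} = 1) (hneg : μneg {o | r o = false} = 1)
    (μ : Measure Ω)
    (hμ : μ = ENNReal.ofReal p • μpos + ENNReal.ofReal (1 - p) • μneg)
    (A : Ω → ℝ)
    (hA : ∀ o, A o = if r o then Real.sqrt ((1 - p) / p) else -Real.sqrt (p / (1 - p)))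
    (h : Ω → ℝ)
    (hpint : Integrable h μpos) (hmint : Integrable h μneg)
    (hAint : Integrable (fun o => h o * A o) μ) :
    ∫ o, h o * A o ∂μ =
      Real.sqrt (p * (1 - p)) * ((∫ o, h o ∂μpos) - ∫ o, h o ∂μneg) :=
  stmt_6_general r hr p hp μpos μneg hpos hneg μ hμ A hA h hpint hmint
end

section
/- (GPG decomposition.) Let Ω, r, p, μ⁺, μ⁻, μ be as in the mixture setup, let Â(o) = 1−p if r o = true and Â(o) = −p otherwise, and let α > 0. Let ρ : Ω → List ℝ assign to each output its nonempty list of token log-probabilities, assume o ↦ (ρ o).length is μ-integrable, set L = ∫ (ρ o).length dμ(o), and define s(o) = (1/L)·Σ_{x ∈ ρ o} x. If s is μ⁺-integrable, μ⁻-integrable, and s·Â is μ-integrable, then ∫ α·s(o)·Â(o) dμ(o) = α·p(1−p) · ( ∫ s dμ⁺ − ∫ s dμ⁻ ). -/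
/-! Under `μ⁺` the advantage is almost surely the constant `1 - p` and under `μ⁻` the constant
`-p`, so splitting the integral over the mixture gives
`p (1 - p) ∫ s dμ⁺ + (1 - p) (-p) ∫ s dμ⁻`. -/

open MeasureTheory

namespace MeasureTheory

variable {α : Type*} [MeasurableSpace α] {μ ν : Measure α}

theorem integral_ofReal_smul_add_ofReal_smul_s10 {G : Type*} [NormedAddCommGroup G]
    [NormedSpace ℝ G] {f : α → G} {a b : ℝ} (ha : 0 ≤ a) (hb : 0 ≤ b)
    (hf : Integrable f (ENNReal.ofReal a • μ + ENNReal.ofReal b • ν)) :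
    ∫ x, f x ∂(ENNReal.ofReal a • μ + ENNReal.ofReal b • ν) =
      a • ∫ x, f x ∂μ + b • ∫ x, f x ∂ν := by
  obtain ⟨hfμ, hfν⟩ := integrable_add_measure.mp hf
  rw [integral_add_measure hfμ hfν, integral_smul_measure, integral_smul_measure,
    ENNReal.toReal_ofReal ha, ENNReal.toReal_ofReal hb]

theorem integral_mul_of_ae_eq_const_s10 {f g : α → ℝ} {c : ℝ} (hg : g =ᵐ[μ] fun _ => c) :
    ∫ x, f x * g x ∂μ = c * ∫ x, f x ∂μ := by
  rw [← integral_const_mul]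
  exact integral_congr_ae (hg.mono fun x hx => by simp only [hx, mul_comm])

theorem ae_of_measure_eq_one [IsProbabilityMeasure μ] {p : α → Prop}
    (hp : MeasurableSet {x | p x}) (h : μ {x | p x} = 1) : ∀ᵐ x ∂μ, p x :=
  (ae_iff_measure_eq hp.nullMeasurableSet).2 (by rw [h, measure_univ])

end MeasureTheory

theorem stmt_10_general {Ω : Type*} [MeasurableSpace Ω]
    (r : Ω → Bool) (hr : Measurable r)
    (p : ℝ) (hp : p ∈ Set.Ioo (0 : ℝ) 1)
    (μpos μneg : Measure Ω) [IsProbabilityMeasure μpos] [IsProbabilityMeasure μneg]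
    (hpos : μpos {o | r o = true} = 1) (hneg : μneg {o | r o = false} = 1)
    (μ : Measure Ω)
    (hμ : μ = ENNReal.ofReal p • μpos + ENNReal.ofReal (1 - p) • μneg)
    (Ahat : Ω → ℝ)
    (hAhat : ∀ o, Ahat o = if r o then 1 - p else -p)
    (α : ℝ)
    (s : Ω → ℝ)
    (hsAint : Integrable (fun o => s o * Ahat o) μ) :
    ∫ o, α * (s o * Ahat o) ∂μ =
      α * (p * (1 - p)) * ((∫ o, s o ∂μpos) - ∫ o, s o ∂μneg) := by
  obtain ⟨hp0, hp1⟩ := hp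
  have hApos : Ahat =ᵐ[μpos] fun _ => 1 - p := by
    filter_upwards [ae_of_measure_eq_one (measurableSet_eq_fun hr measurable_const) hpos] with o ho
    simp [hAhat, ho]
  have hAneg : Ahat =ᵐ[μneg] fun _ => -p := by
    filter_upwards [ae_of_measure_eq_one (measurableSet_eq_fun hr measurable_const) hneg] with o ho
    simp [hAhat, ho]
  subst hμ
  rw [integral_const_mul, integral_ofReal_smul_add_ofReal_smul_s10 hp0.le (by linarith) hsAint,
    integral_mul_of_ae_eq_const_s10 hApos, integral_mul_of_ae_eq_const_s10 hAneg, smul_eq_mul,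
    smul_eq_mul]
  ring

theorem stmt_10 {Ω : Type*} [MeasurableSpace Ω]
    (r : Ω → Bool) (hr : Measurable r)
    (p : ℝ) (hp : p ∈ Set.Ioo (0 : ℝ) 1)
    (μpos μneg : Measure Ω) [IsProbabilityMeasure μpos] [IsProbabilityMeasure μneg]
    (hpos : μpos {o | r o = true} = 1) (hneg : μneg {o | r o = false} = 1)
    (μ : Measure Ω)
    (hμ : μ = ENNReal.ofReal p • μpos + ENNReal.ofReal (1 - p) • μneg)
    (Ahat : Ω → ℝ)
    (hAhat : ∀ o, Ahat o = if r o then 1 - p else -p)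
    (α : ℝ) (hα : 0 < α)
    (ρ : Ω → List ℝ) (hρ : ∀ o, ρ o ≠ [])
    (hlen : Integrable (fun o => ((ρ o).length : ℝ)) μ)
    (L : ℝ) (hL : L = ∫ o, ((ρ o).length : ℝ) ∂μ)
    (s : Ω → ℝ)
    (hs : ∀ o, s o = (1 / L) * (ρ o).sum)
    (hspint : Integrable s μpos) (hsmint : Integrable s μneg)
    (hsAint : Integrable (fun o => s o * Ahat o) μ) :
    ∫ o, α * (s o * Ahat o) ∂μ =
      α * (p * (1 - p)) * ((∫ o, s o ∂μpos) - ∫ o, s o ∂μneg) :=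
  stmt_10_general r hr p hp μpos μneg hpos hneg μ hμ Ahat hAhat α s hsAint
end
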